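/- Let (X_n)_{n≥0} be a stationary ℝ^d-valued process having the multiple mixing property with respect to a Banach space (B,‖·‖) with constants 0 < θ < 1 and r ≥ 1. Then for every integer p ≥ 1 there exists a constant K > 0, independent of n and φ, such that for every n ≥ 1 and every φ ∈ B with E[φ(X_0)] = 0 and sup_x|φ(x)| ≤ 1: E[(S_n(φ))^{2p}] ≤ K · Σ_{i=1}^{p} n^i · ‖φ(X_0)‖_{L^r}^i · (log(‖φ‖ + θ^{−1}))^{2p−i}. -/

import Mathlib

open MeasureTheory Finset

noncomputable section

/-- `istar i k = i_1 + ⋯ + i_k`, the partial sums of the gaps `i : Fin p → ℕ`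
(so `istar i 0 = 0`, and `X (istar i 0) = X 0`). -/
def istar {p : ℕ} (i : Fin p → ℕ) (k : ℕ) : ℕ :=
  ∑ j ∈ Finset.univ.filter (fun j : Fin p => (j : ℕ) < k), i j

/-- Stationarity of a process: all shifts have the same law. -/
def IsStationaryProc {d : ℕ} {Ω : Type*} [MeasurableSpace Ω] (P : Measure Ω)
    (X : ℕ → Ω → (Fin d → ℝ)) : Prop :=
  ∀ k : ℕ, Measure.map (fun ω (n : ℕ) => X (n + k) ω) P =
    Measure.map (fun ω (n : ℕ) => X n ω) P

/-- The multiple mixing property of the process `X` with respect to the space `B`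
(with norm `Bnorm`), with constants `0 < θ < 1` and `r ≥ 1`: for every `p ≥ 1`
there are `C > 0`, an exponent `ℓ ∈ ℕ` and a polynomial `Q` in `p` variables with
nonnegative coefficients such that for all gaps `i_1,…,i_p`, every `1 ≤ q ≤ p`
and every centered `φ ∈ B` with `sup|φ| ≤ 1`,
`|Cov(φ(X_0)⋯φ(X_{i_{q-1}^*}), φ(X_{i_q^*})⋯φ(X_{i_p^*}))|
  ≤ C ‖φ(X_0)‖_{L^r} ‖φ‖^ℓ Q(i_1,…,i_p) θ^{i_q}`. -/
def MultipleMixing {d : ℕ} {Ω : Type*} [MeasurableSpace Ω] (P : Measure Ω)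
    (X : ℕ → Ω → (Fin d → ℝ)) (B : Set ((Fin d → ℝ) → ℝ))
    (Bnorm : ((Fin d → ℝ) → ℝ) → ℝ) (θ r : ℝ) : Prop :=
  ∀ p : ℕ, 1 ≤ p →
    ∃ C > (0 : ℝ), ∃ (ℓ : ℕ) (Q : MvPolynomial (Fin p) ℝ),
      (∀ m, 0 ≤ Q.coeff m) ∧
      ∀ (i : Fin p → ℕ) (q : ℕ) (hq : 1 ≤ q) (hqp : q ≤ p),
        ∀ φ ∈ B, (∫ ω, φ (X 0 ω) ∂P) = 0 → (∀ x, |φ x| ≤ 1) →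
          |(∫ ω, (∏ k ∈ Finset.range q, φ (X (istar i k) ω)) *
              (∏ k ∈ Finset.Icc q p, φ (X (istar i k) ω)) ∂P) -
            (∫ ω, ∏ k ∈ Finset.range q, φ (X (istar i k) ω) ∂P) *
            (∫ ω, ∏ k ∈ Finset.Icc q p, φ (X (istar i k) ω) ∂P)| ≤
          C * (∫ ω, |φ (X 0 ω)| ^ r ∂P) ^ (1 / r) * Bnorm φ ^ ℓ *
            MvPolynomial.eval (fun k => (i k : ℝ)) Q * θ ^ (i ⟨q - 1, by omega⟩)

/-!
Expanding the power and sorting the indices, stationarity bounds `E[S_n(φ)^{2p}]` by `(2p)! n`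
times `Δ_m(n) = Σ_{i ∈ [0,n)^m} |E[φ(X_0) φ(X_{i_1^*}) ⋯ φ(X_{i_m^*})]|` with `m = 2p - 1`.
`Δ_m` is bounded by strong induction on `m`. Choose `T ≈ 2ℓ log(‖φ‖ + θ⁻¹) / log θ⁻¹`, so that
`‖φ‖^ℓ θ^s ≤ θ^{s/2}` for `s > T`. The at most `(T+1)^m` gap vectors with all gaps `≤ T`
contribute at most `‖φ(X_0)‖_{L^1} ≤ ‖φ(X_0)‖_{L^r}` each. Any other gap vector is cut at a
largest gap `i_q > T`: the moment is at most the covariance across the cut, which multiple mixing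
bounds by `‖φ(X_0)‖_{L^r} poly(i_q) θ^{i_q/2}` (summable in `i_q`, as the other gaps are at most
`i_q`), plus the product of the moments on both sides, controlled by the induction hypothesis.
-/

lemma Finset.sum_comp_le_sum_image_mul_of_card_fiber_le {α β : Type*} [DecidableEq β]
    {s : Finset α} {g : α → β} {f : β → ℝ} {N : β → ℕ} (hf : ∀ b ∈ s.image g, 0 ≤ f b)
    (hN : ∀ b ∈ s.image g, #{a ∈ s | g a = b} ≤ N b) :
    ∑ a ∈ s, f (g a) ≤ ∑ b ∈ s.image g, N b * f b := by
  rw [Finset.sum_comp]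
  exact sum_le_sum fun b hb => by
    rw [nsmul_eq_mul]; exact mul_le_mul_of_nonneg_right (by exact_mod_cast hN b hb) (hf b hb)

lemma Finset.sum_comp_le_of_injOn {α β : Type*} {s : Finset α} {t : Finset β} {g : α → β}
    {f : β → ℝ} (hf : ∀ b ∈ t, 0 ≤ f b) (hg : ∀ a ∈ s, g a ∈ t) (hinj : Set.InjOn g s) :
    ∑ a ∈ s, f (g a) ≤ ∑ b ∈ t, f b := by
  classical
  rw [← sum_image hinj]
  exact sum_le_sum_of_subset_of_nonneg (image_subset_iff.2 hg) fun b hb _ => hf b hb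

lemma MvPolynomial.eval_le_of_coeff_nonneg {σ : Type*} [Fintype σ] {Q : MvPolynomial σ ℝ}
    (hQ : ∀ μ, 0 ≤ Q.coeff μ) {x : σ → ℝ} {s : ℝ} (hs : 0 ≤ s) (hx0 : ∀ k, 0 ≤ x k)
    (hxs : ∀ k, x k ≤ s) :
    eval x Q ≤ (∑ μ ∈ Q.support, Q.coeff μ) * (s + 1) ^ Q.totalDegree := by
  rw [eval_eq', sum_mul]
  refine sum_le_sum fun μ hμ => mul_le_mul_of_nonneg_left ?_ (hQ μ)
  calc ∏ k, x k ^ μ k ≤ ∏ k, (s + 1) ^ μ k :=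
        prod_le_prod (fun k _ => pow_nonneg (hx0 k) _)
          fun k _ => pow_le_pow_left₀ (hx0 k) (by linarith [hxs k]) _
    _ = (s + 1) ^ ∑ k, μ k := prod_pow_eq_pow_sum _ _ _
    _ ≤ (s + 1) ^ Q.totalDegree := pow_le_pow_right₀ (by linarith) <| by
        simpa [Finsupp.sum_fintype] using le_totalDegree hμ

lemma summable_add_one_pow_mul_geometric {ρ : ℝ} (hρ0 : 0 < ρ) (hρ1 : ρ < 1) (M : ℕ) :
    Summable fun s : ℕ => ((s : ℝ) + 1) ^ M * ρ ^ s := by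
  have h : Summable fun s : ℕ => ((s + 1 : ℕ) : ℝ) ^ M * ρ ^ (s + 1) :=
    (summable_nat_add_iff (f := fun s : ℕ => (s : ℝ) ^ M * ρ ^ s) 1).2 <|
      summable_pow_mul_geometric_of_norm_lt_one M (by rwa [Real.norm_eq_abs, abs_of_pos hρ0])
  refine (h.mul_left ρ⁻¹).congr fun s => ?_
  rw [pow_succ, Nat.cast_succ]
  field_simp

lemma pow_mul_pow_le_sqrt_pow {b θ : ℝ} {ℓ s : ℕ} (hb : 0 ≤ b) (hθ0 : 0 < θ)
    (hs : 2 * ℓ * Real.log (b + θ⁻¹) ≤ s * Real.log θ⁻¹) : b ^ ℓ * θ ^ s ≤ √θ ^ s := by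
  have hθ : θ ^ s = √θ ^ s * √θ ^ s := by rw [← mul_pow, Real.mul_self_sqrt hθ0.le]
  have hlog : (b + θ⁻¹) ^ (2 * ℓ) ≤ θ⁻¹ ^ s := by
    rw [← Real.log_le_log_iff (by positivity) (by positivity), Real.log_pow, Real.log_pow]
    push_cast; linarith
  have hsq : (b ^ ℓ * √θ ^ s) ^ 2 ≤ 1 := calc
    (b ^ ℓ * √θ ^ s) ^ 2 = b ^ (2 * ℓ) * θ ^ s := by rw [hθ]; ring
    _ ≤ θ⁻¹ ^ s * θ ^ s := by
        gcongr
        exact hlog.trans' (pow_le_pow_left₀ hb (le_add_of_nonneg_right (by positivity)) _)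
    _ = 1 := by rw [← mul_pow, inv_mul_cancel₀ hθ0.ne', one_pow]
  have h1 : b ^ ℓ * √θ ^ s ≤ 1 := (pow_le_one_iff_of_nonneg (by positivity) two_ne_zero).1 hsq
  calc b ^ ℓ * θ ^ s = (b ^ ℓ * √θ ^ s) * √θ ^ s := by rw [hθ]; ring
    _ ≤ √θ ^ s := mul_le_of_le_one_left (by positivity) h1

lemma exists_threshold_pow_mul_pow_le_sqrt_pow {b θ : ℝ} (hb : 0 ≤ b) (hθ0 : 0 < θ)
    (hθ1 : θ < 1) (ℓ : ℕ) :
    ∃ T : ℕ, ((T : ℝ) + 1 ≤ (2 * ℓ + 2) / Real.log θ⁻¹ * Real.log (b + θ⁻¹)) ∧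
      ∀ s, T < s → b ^ ℓ * θ ^ s ≤ √θ ^ s := by
  set Λ₀ := Real.log θ⁻¹
  set Λ := Real.log (b + θ⁻¹)
  have hΛ₀ : 0 < Λ₀ := Real.log_pos ((one_lt_inv₀ hθ0).2 hθ1)
  have hΛ : Λ₀ ≤ Λ := Real.log_le_log (inv_pos.2 hθ0) (le_add_of_nonneg_left hb)
  refine ⟨⌈2 * ℓ * Λ / Λ₀⌉₊, ?_, fun s hs => ?_⟩
  · have hceil := Nat.ceil_lt_add_one
      (div_nonneg (by positivity [hΛ₀.le.trans hΛ]) hΛ₀.le : 0 ≤ 2 * ℓ * Λ / Λ₀)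
    have : 2 * ℓ * Λ / Λ₀ + 2 ≤ (2 * ℓ + 2) / Λ₀ * Λ := by
      rw [div_mul_eq_mul_div, le_div_iff₀ hΛ₀, add_mul, div_mul_cancel₀ _ hΛ₀.ne']
      linarith
    linarith
  · apply pow_mul_pow_le_sqrt_pow hb hθ0
    rw [← div_le_iff₀ hΛ₀]
    exact (Nat.le_ceil _).trans (by exact_mod_cast hs.le)

lemma integral_abs_le_integral_abs_rpow_rpow {Ω : Type*} [MeasurableSpace Ω] {P : Measure Ω}
    [IsProbabilityMeasure P] {f : Ω → ℝ} {r : ℝ} (hr : 1 ≤ r)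
    (hf : MemLp f (ENNReal.ofReal r) P) :
    ∫ ω, |f ω| ∂P ≤ (∫ ω, |f ω| ^ r ∂P) ^ (1 / r) := by
  have hr1 : (1 : ENNReal) ≤ ENNReal.ofReal r := by simpa using ENNReal.ofReal_le_ofReal hr
  have hle := eLpNorm_le_eLpNorm_of_exponent_le hr1 hf.aestronglyMeasurable
  rw [(hf.mono_exponent hr1).eLpNorm_eq_integral_rpow_norm one_ne_zero ENNReal.one_ne_top,
    hf.eLpNorm_eq_integral_rpow_norm (by simp; linarith) ENNReal.ofReal_ne_top,
    ENNReal.ofReal_le_ofReal_iff (by positivity)] at hle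
  simpa [Real.norm_eq_abs, ENNReal.toReal_ofReal (by linarith : (0 : ℝ) ≤ r)] using hle

lemma IsStationaryProc.integral_comp_shift {d : ℕ} {Ω : Type*} [MeasurableSpace Ω]
    {P : Measure Ω} {X : ℕ → Ω → (Fin d → ℝ)} (hstat : IsStationaryProc P X)
    (hX : ∀ n, Measurable (X n)) {F : (ℕ → Fin d → ℝ) → ℝ} (hF : Measurable F) (c : ℕ) :
    ∫ ω, F (fun n => X (n + c) ω) ∂P = ∫ ω, F (fun n => X n ω) ∂P := by
  rw [← integral_map (measurable_pi_lambda _ fun n => hX (n + c)).aemeasurable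
      hF.aestronglyMeasurable, hstat c,
    integral_map (measurable_pi_lambda _ fun n => hX n).aemeasurable hF.aestronglyMeasurable]

section GapVectors

variable {m : ℕ}

-- `gapSeq i j` is the paper's gap `i_{j+1}`.
def gapSeq (i : Fin m → ℕ) (j : ℕ) : ℕ := if h : j < m then i ⟨j, h⟩ else 0

lemma gapSeq_of_lt (i : Fin m → ℕ) {j : ℕ} (h : j < m) : gapSeq i j = i ⟨j, h⟩ := dif_pos h

lemma gapSeq_of_le (i : Fin m → ℕ) {j : ℕ} (h : m ≤ j) : gapSeq i j = 0 := dif_neg (by omega)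

lemma istar_succ (i : Fin m → ℕ) (k : ℕ) : istar i (k + 1) = istar i k + gapSeq i k := by
  have hsplit : ∀ j : Fin m, (if (j : ℕ) < k + 1 then i j else 0) =
      (if (j : ℕ) < k then i j else 0) + if (j : ℕ) = k then i j else 0 := by
    intro j; split_ifs <;> omega
  simp only [istar, sum_filter, hsplit, sum_add_distrib, add_right_inj]
  rcases lt_or_ge k m with h | h
  · rw [gapSeq_of_lt i h, Fintype.sum_eq_single ⟨k, h⟩ fun j hj => if_neg (by grind)]
    simp
  · rw [gapSeq_of_le i h]
    exact sum_eq_zero fun j _ => if_neg (by omega)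

lemma istar_eq_sum_range (i : Fin m → ℕ) (k : ℕ) : istar i k = ∑ j ∈ range k, gapSeq i j := by
  induction k with
  | zero => simp [istar]
  | succ k ih => rw [istar_succ, ih, sum_range_succ]

def initGaps (i : Fin m → ℕ) (j : ℕ) : Fin j → ℕ := fun k => gapSeq i k

def tailGaps (i : Fin m → ℕ) (q : ℕ) : Fin (m - q) → ℕ := fun k => gapSeq i (q + k)

lemma istar_initGaps (i : Fin m → ℕ) {j k : ℕ} (hk : k ≤ j) :
    istar (initGaps i j) k = istar i k := by
  simp only [istar_eq_sum_range]
  exact sum_congr rfl fun l hl => by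
    rw [gapSeq_of_lt _ (by simp at hl; omega)]; rfl

lemma istar_add_tailGaps (i : Fin m → ℕ) (q t : ℕ) :
    istar i (q + t) = istar i q + istar (tailGaps i q) t := by
  simp only [istar_eq_sum_range, sum_range_add]
  congr 1
  refine sum_congr rfl fun l _ => ?_
  rcases lt_or_ge l (m - q) with h | h
  · rw [gapSeq_of_lt _ h]; rfl
  · rw [gapSeq_of_le _ h, gapSeq_of_le _ (by omega)]

def gapsOf (b : Fin (m + 1) → ℕ) : Fin m → ℕ := fun j => b j.succ - b j.castSucc

lemma add_istar_gapsOf {b : Fin (m + 1) → ℕ} (hb : Monotone b) (l : Fin (m + 1)) :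
    b 0 + istar (gapsOf b) l = b l := by
  induction l using Fin.induction with
  | zero => simp [istar_eq_sum_range]
  | succ j ih =>
    rw [Fin.val_castSucc] at ih
    rw [Fin.val_succ, istar_succ, gapSeq_of_lt _ j.isLt, ← add_assoc, ih]
    have := hb (Fin.castSucc_le_succ j)
    simp only [gapsOf, Fin.eta]
    omega

def indexBox (m n : ℕ) : Finset (Fin m → ℕ) := Fintype.piFinset fun _ => range n

@[simp]
lemma mem_indexBox {n : ℕ} {i : Fin m → ℕ} : i ∈ indexBox m n ↔ ∀ k, i k < n := by
  simp [indexBox]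

lemma card_indexBox (n : ℕ) : #(indexBox m n) = n ^ m := by
  simp [indexBox]

lemma card_filter_indexBox_le (n s : ℕ) :
    #{i ∈ indexBox m n | ∀ k, i k ≤ s} ≤ (s + 1) ^ m :=
  (card_le_card fun i hi => by
    simp only [mem_filter] at hi
    exact mem_indexBox.2 fun k => Nat.lt_succ_of_le (hi.2 k)).trans (card_indexBox _).le

end GapVectors

section IndexBox

variable {m n : ℕ}

lemma sum_indexBox_le_sum_small_add_sum_max (T : ℕ) {F : (Fin m → ℕ) → ℝ}
    (hF : ∀ i, 0 ≤ F i) :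
    ∑ i ∈ indexBox m n, F i ≤ ∑ i ∈ indexBox m n with ∀ k, i k ≤ T, F i +
      ∑ j, ∑ i ∈ indexBox m n with (∀ k, i k ≤ i j) ∧ T < i j, F i := by
  have hcover : ∀ i, F i ≤ (if ∀ k, i k ≤ T then F i else 0) +
      ∑ j, if (∀ k, i k ≤ i j) ∧ T < i j then F i else 0 := by
    intro i
    have hterms : ∀ j, 0 ≤ if (∀ k, i k ≤ i j) ∧ T < i j then F i else 0 :=
      fun j => by split_ifs <;> simp [hF]
    by_cases hsmall : ∀ k, i k ≤ T
    · rw [if_pos hsmall]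
      exact le_add_of_nonneg_right (sum_nonneg fun j _ => hterms j)
    · push Not at hsmall
      obtain ⟨k₀, hk₀⟩ := hsmall
      obtain ⟨j, -, hj⟩ := exists_max_image univ i ⟨k₀, mem_univ _⟩
      have hmax : (∀ k, i k ≤ i j) ∧ T < i j :=
        ⟨fun k => hj k (mem_univ _), hk₀.trans_le (hj k₀ (mem_univ _))⟩
      calc F i = if (∀ k, i k ≤ i j) ∧ T < i j then F i else 0 := (if_pos hmax).symm
        _ ≤ _ := single_le_sum (fun j _ => hterms j) (mem_univ j)
        _ ≤ _ := le_add_of_nonneg_left (by split_ifs <;> simp [hF])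
  refine (sum_le_sum fun i _ => hcover i).trans_eq ?_
  rw [sum_add_distrib, sum_comm, sum_filter]
  simp only [sum_filter]

lemma sum_filter_max_le_sum_range (j : Fin m) {g : ℕ → ℝ} (hg : ∀ s, 0 ≤ g s) :
    ∑ i ∈ indexBox m n with ∀ k, i k ≤ i j, g (i j) ≤ ∑ s ∈ range n, (s + 1) ^ m * g s := by
  calc ∑ i ∈ indexBox m n with ∀ k, i k ≤ i j, g (i j)
      ≤ ∑ s ∈ {i ∈ indexBox m n | ∀ k, i k ≤ i j}.image (· j), ((s + 1) ^ m : ℕ) * g s :=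
        sum_comp_le_sum_image_mul_of_card_fiber_le (fun s _ => hg s) fun s _ =>
          (card_le_card fun i hi => by
            simp only [mem_filter] at hi ⊢
            exact ⟨hi.1.1, hi.2 ▸ hi.1.2⟩).trans (card_filter_indexBox_le n s)
    _ ≤ ∑ s ∈ range n, (s + 1) ^ m * g s := by
        push_cast
        refine sum_le_sum_of_subset_of_nonneg (fun s hs => ?_) fun s _ _ =>
          mul_nonneg (by positivity) (hg s)
        obtain ⟨i, hi, rfl⟩ := mem_image.1 hs
        exact mem_range.2 (mem_indexBox.1 (mem_filter.1 hi).1 j)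

lemma sum_mul_initGaps_tailGaps_le (j : Fin m) {f : (Fin j → ℕ) → ℝ}
    {g : (Fin (m - (j + 1)) → ℕ) → ℝ} (hf : ∀ a, 0 ≤ f a) (hg : ∀ b, 0 ≤ g b) :
    ∑ i ∈ indexBox m n, f (initGaps i j) * g (tailGaps i (j + 1)) ≤
      (∑ a ∈ indexBox j n, f a) * (n * ∑ b ∈ indexBox (m - (j + 1)) n, g b) := by
  have hmaps : ∀ i ∈ indexBox m n, (initGaps i j, i j, tailGaps i (j + 1)) ∈
      indexBox j n ×ˢ range n ×ˢ indexBox (m - (j + 1)) n := by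
    intro i hi
    simp only [mem_product, mem_indexBox, mem_range] at hi ⊢
    refine ⟨fun k => ?_, hi j, fun k => ?_⟩ <;> simp only [initGaps, tailGaps] <;>
      rw [gapSeq_of_lt _ (by omega)] <;> exact hi _
  have hinj : Set.InjOn (fun i => (initGaps i j, i j, tailGaps i (j + 1)))
      (indexBox m n : Set (Fin m → ℕ)) := by
    intro i _ i' _ h
    simp only [Prod.mk.injEq] at h
    obtain ⟨hinit, hmid, htail⟩ := h
    funext k
    rcases lt_trichotomy (k : ℕ) j with hk | hk | hk
    · have := congrFun hinit ⟨k, hk⟩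
      simpa [initGaps, gapSeq_of_lt _ k.isLt] using this
    · rwa [show k = j from Fin.ext hk]
    · have := congrFun htail ⟨k - (j + 1), by omega⟩
      simp only [tailGaps] at this
      rwa [show j + 1 + (k - (j + 1)) = (k : ℕ) by omega, gapSeq_of_lt _ k.isLt,
        gapSeq_of_lt _ k.isLt] at this
  calc ∑ i ∈ indexBox m n, f (initGaps i j) * g (tailGaps i (j + 1))
      ≤ ∑ x ∈ indexBox j n ×ˢ range n ×ˢ indexBox (m - (j + 1)) n, f x.1 * g x.2.2 :=
        sum_comp_le_of_injOn (f := fun x => f x.1 * g x.2.2)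
          (fun x _ => mul_nonneg (hf _) (hg _)) hmaps hinj
    _ = _ := by
        simp only [sum_product, ← mul_sum, ← sum_mul, sum_const, card_range, nsmul_eq_mul]

lemma sum_indexBox_le_factorial_mul_sum_gaps {H : (Fin (m + 1) → ℕ) → ℝ}
    {G : (Fin m → ℕ) → ℝ} (hG : ∀ i, 0 ≤ G i)
    (hperm : ∀ g (σ : Equiv.Perm (Fin (m + 1))), H (g ∘ σ) = H g)
    (hmono : ∀ b, Monotone b → H b = G (gapsOf b)) :
    ∑ g ∈ indexBox (m + 1) n, H g ≤ (m + 1).factorial * (n * ∑ i ∈ indexBox m n, G i) := by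
  set sorted : Finset (Fin (m + 1) → ℕ) := (indexBox (m + 1) n).image fun g => g ∘ Tuple.sort g
  have hsorted : ∀ b ∈ sorted, Monotone b ∧ ∀ l, b l < n := by
    intro b hb
    obtain ⟨g, hg, rfl⟩ := mem_image.1 hb
    exact ⟨Tuple.monotone_sort g, fun l => mem_indexBox.1 hg _⟩
  have hfiber : ∀ b ∈ sorted,
      #{g ∈ indexBox (m + 1) n | g ∘ Tuple.sort g = b} ≤ (m + 1).factorial := by
    intro b _
    calc #{g ∈ indexBox (m + 1) n | g ∘ Tuple.sort g = b}
        ≤ #(univ.image fun σ : Equiv.Perm (Fin (m + 1)) => b ∘ ⇑σ) :=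
          card_le_card fun g hg => mem_image.2 ⟨(Tuple.sort g)⁻¹, mem_univ _, by
            rw [← (mem_filter.1 hg).2]; ext; simp⟩
      _ ≤ (m + 1).factorial := card_image_le.trans <| by
          rw [card_univ, Fintype.card_perm, Fintype.card_fin]
  have hinj : Set.InjOn (fun b => (b 0, gapsOf b)) (sorted : Set (Fin (m + 1) → ℕ)) := by
    intro b hb b' hb' h
    simp only [Prod.mk.injEq] at h
    funext l
    rw [← add_istar_gapsOf (hsorted b hb).1, ← add_istar_gapsOf (hsorted b' hb').1, h.1, h.2]
  calc ∑ g ∈ indexBox (m + 1) n, H g = ∑ g ∈ indexBox (m + 1) n, H (g ∘ Tuple.sort g) :=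
        sum_congr rfl fun g _ => (hperm g _).symm
    _ ≤ ∑ b ∈ sorted, ((m + 1).factorial : ℕ) * H b :=
        sum_comp_le_sum_image_mul_of_card_fiber_le
          (fun b hb => (hmono b (hsorted b hb).1).symm ▸ hG _) hfiber
    _ = (m + 1).factorial * ∑ b ∈ sorted, G (gapsOf b) := by
        rw [mul_sum]; exact sum_congr rfl fun b hb => by rw [hmono b (hsorted b hb).1]
    _ ≤ (m + 1).factorial * ∑ x ∈ range n ×ˢ indexBox m n, G x.2 := by
        gcongr
        refine sum_comp_le_of_injOn (g := fun b => (b 0, gapsOf b)) (f := fun x => G x.2)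
          (fun x _ => hG _) (fun b hb => ?_) hinj
        obtain ⟨-, hbn⟩ := hsorted b hb
        simp only [mem_product, mem_range, mem_indexBox, gapsOf]
        exact ⟨hbn 0, fun j => (Nat.sub_le _ _).trans_lt (hbn _)⟩
    _ = (m + 1).factorial * (n * ∑ i ∈ indexBox m n, G i) := by
        simp only [sum_product, sum_const, card_range, nsmul_eq_mul]

end IndexBox

section Moments
variable {d : ℕ} {Ω : Type*} [MeasurableSpace Ω] (P : Measure Ω) (X : ℕ → Ω → (Fin d → ℝ))
  (φ : (Fin d → ℝ) → ℝ)

def gapMoment (m : ℕ) (i : Fin m → ℕ) : ℝ :=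
  |∫ ω, ∏ k ∈ range (m + 1), φ (X (istar i k) ω) ∂P|

def gapMomentSum (m n : ℕ) : ℝ := ∑ i ∈ indexBox m n, gapMoment P X φ m i

def gapCov (m q : ℕ) (i : Fin m → ℕ) : ℝ :=
  |(∫ ω, (∏ k ∈ range q, φ (X (istar i k) ω)) * (∏ k ∈ Icc q m, φ (X (istar i k) ω)) ∂P) -
    (∫ ω, ∏ k ∈ range q, φ (X (istar i k) ω) ∂P) * (∫ ω, ∏ k ∈ Icc q m, φ (X (istar i k) ω) ∂P)|

variable {P X φ}

lemma gapMoment_nonneg (m : ℕ) (i : Fin m → ℕ) : 0 ≤ gapMoment P X φ m i := abs_nonneg _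

lemma gapMomentSum_nonneg (m n : ℕ) : 0 ≤ gapMomentSum P X φ m n :=
  sum_nonneg fun i _ => gapMoment_nonneg m i

lemma gapMomentSum_zero (hcent : ∫ ω, φ (X 0 ω) ∂P = 0) (n : ℕ) :
    gapMomentSum P X φ 0 n = 0 :=
  sum_eq_zero fun i _ => by simp [gapMoment, istar_eq_sum_range, hcent]

lemma integrable_prod_comp [IsFiniteMeasure P] (hX : ∀ n, Measurable (X n))
    (hφm : Measurable φ) (hφb : ∀ x, |φ x| ≤ 1) {ι : Type*} (s : Finset ι) (j : ι → ℕ) :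
    Integrable (fun ω => ∏ k ∈ s, φ (X (j k) ω)) P :=
  .of_bound (Finset.measurable_prod _ fun k _ => hφm.comp (hX (j k))).aestronglyMeasurable 1 <|
    ae_of_all _ fun ω => by
      rw [Real.norm_eq_abs, abs_prod]
      exact prod_le_one (fun k _ => abs_nonneg _) fun k _ => hφb _

lemma gapMoment_le_integral_abs [IsFiniteMeasure P] (hX : ∀ n, Measurable (X n))
    (hφm : Measurable φ) (hφb : ∀ x, |φ x| ≤ 1) (m : ℕ) (i : Fin m → ℕ) :
    gapMoment P X φ m i ≤ ∫ ω, |φ (X 0 ω)| ∂P := by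
  have hint : Integrable (fun ω => φ (X 0 ω)) P := by
    simpa using integrable_prod_comp hX hφm hφb {0} fun _ => 0
  refine abs_integral_le_integral_abs.trans <|
    integral_mono (integrable_prod_comp hX hφm hφb _ _).abs hint.abs fun ω => ?_
  rw [prod_range_succ', abs_mul, istar_eq_sum_range, sum_range_zero, abs_prod]
  exact mul_le_of_le_one_left (abs_nonneg _) <|
    prod_le_one (fun _ _ => abs_nonneg _) fun _ _ => hφb _

lemma integral_prod_Icc_eq_tailGaps (hX : ∀ n, Measurable (X n)) (hstat : IsStationaryProc P X)
    (hφm : Measurable φ) {m q : ℕ} (hqm : q ≤ m) (i : Fin m → ℕ) :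
    ∫ ω, ∏ k ∈ Icc q m, φ (X (istar i k) ω) ∂P =
      ∫ ω, ∏ t ∈ range (m - q + 1), φ (X (istar (tailGaps i q) t) ω) ∂P := by
  have hshift : ∀ ω, ∏ k ∈ Icc q m, φ (X (istar i k) ω) =
      ∏ t ∈ range (m - q + 1), φ (X (istar (tailGaps i q) t + istar i q) ω) := fun ω => by
    rw [← Ico_add_one_right_eq_Icc, prod_Ico_eq_prod_range, show m + 1 - q = m - q + 1 by omega]
    exact prod_congr rfl fun t _ => by rw [istar_add_tailGaps, add_comm]
  simp only [hshift]
  exact hstat.integral_comp_shift hX (F := fun ξ => ∏ t ∈ range (m - q + 1),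
    φ (ξ (istar (tailGaps i q) t))) (Finset.measurable_prod _ fun t _ =>
      hφm.comp (measurable_pi_apply _)) _

lemma gapMoment_le_gapCov_add_mul (hX : ∀ n, Measurable (X n)) (hstat : IsStationaryProc P X)
    (hφm : Measurable φ) {m : ℕ} (i : Fin m → ℕ) (j : Fin m) :
    gapMoment P X φ m i ≤ gapCov P X φ m (j + 1) i +
      gapMoment P X φ j (initGaps i j) * gapMoment P X φ (m - (j + 1)) (tailGaps i (j + 1)) := by
  have hsplit : ∀ ω, ∏ k ∈ range (m + 1), φ (X (istar i k) ω) =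
      (∏ k ∈ range (j + 1), φ (X (istar i k) ω)) * ∏ k ∈ Icc ((j : ℕ) + 1) m, φ (X (istar i k) ω) :=
    fun ω => by
      rw [← Ico_add_one_right_eq_Icc, prod_range_mul_prod_Ico _ (by omega)]
  have hinit : |∫ ω, ∏ k ∈ range (j + 1), φ (X (istar i k) ω) ∂P| =
      gapMoment P X φ j (initGaps i j) := by
    refine congrArg abs (integral_congr_ae (ae_of_all _ fun ω => prod_congr rfl fun k hk => ?_))
    rw [istar_initGaps i (Nat.lt_succ_iff.1 (mem_range.1 hk))]
  have htail : |∫ ω, ∏ k ∈ Icc ((j : ℕ) + 1) m, φ (X (istar i k) ω) ∂P| =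
      gapMoment P X φ (m - (j + 1)) (tailGaps i (j + 1)) := by
    rw [gapMoment, integral_prod_Icc_eq_tailGaps hX hstat hφm j.isLt i]
  rw [gapMoment, gapCov, ← hinit, ← htail, ← abs_mul]
  simp only [hsplit]
  exact sub_le_iff_le_add.1 (abs_sub_abs_le_abs_sub _ _)

lemma abs_integral_prod_eq_gapMoment (hX : ∀ n, Measurable (X n))
    (hstat : IsStationaryProc P X) (hφm : Measurable φ) {m : ℕ} {b : Fin (m + 1) → ℕ}
    (hb : Monotone b) : |∫ ω, ∏ l, φ (X (b l) ω) ∂P| = gapMoment P X φ m (gapsOf b) := by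
  have hshift : ∀ ω, ∏ l, φ (X (b l) ω) =
      ∏ k ∈ range (m + 1), φ (X (istar (gapsOf b) k + b 0) ω) := fun ω => by
    rw [← Fin.prod_univ_eq_prod_range (fun k => φ (X (istar (gapsOf b) k + b 0) ω))]
    exact prod_congr rfl fun l _ => by rw [add_comm, add_istar_gapsOf hb]
  simp only [hshift, gapMoment]
  rw [hstat.integral_comp_shift hX (F := fun ξ => ∏ k ∈ range (m + 1),
    φ (ξ (istar (gapsOf b) k))) (Finset.measurable_prod _ fun k _ =>
      hφm.comp (measurable_pi_apply _))]

lemma integral_sum_pow_succ_le [IsFiniteMeasure P] (hX : ∀ n, Measurable (X n))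
    (hstat : IsStationaryProc P X) (hφm : Measurable φ) (hφb : ∀ x, |φ x| ≤ 1) (m n : ℕ) :
    ∫ ω, (∑ i ∈ range n, φ (X i ω)) ^ (m + 1) ∂P ≤
      (m + 1).factorial * (n * gapMomentSum P X φ m n) := by
  have hexpand : ∀ ω, (∑ i ∈ range n, φ (X i ω)) ^ (m + 1) =
      ∑ g ∈ indexBox (m + 1) n, ∏ l, φ (X (g l) ω) := fun ω => by
    rw [← Fin.prod_const, prod_univ_sum]; rfl
  simp only [hexpand]
  rw [integral_finsetSum _ fun g _ => integrable_prod_comp hX hφm hφb univ g]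
  refine (sum_le_sum fun g _ => le_abs_self _).trans <|
    sum_indexBox_le_factorial_mul_sum_gaps (fun i => gapMoment_nonneg m i)
      (fun g σ => ?_) fun b hb => abs_integral_prod_eq_gapMoment hX hstat hφm hb
  exact congrArg abs <| integral_congr_ae <| ae_of_all _ fun ω =>
    Equiv.prod_comp σ fun l => φ (X (g l) ω)

lemma gapMomentSum_le_of_gapCov_le [IsFiniteMeasure P] (hX : ∀ n, Measurable (X n))
    (hstat : IsStationaryProc P X) (hφm : Measurable φ) (hφb : ∀ x, |φ x| ≤ 1)
    {m n T : ℕ} {L : ℝ} (hL : ∫ ω, |φ (X 0 ω)| ∂P ≤ L) {h : ℕ → ℝ} (hh : ∀ s, 0 ≤ h s)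
    (hcov : ∀ i (j : Fin m), (∀ k, i k ≤ i j) → T < i j → gapCov P X φ m (j + 1) i ≤ h (i j)) :
    gapMomentSum P X φ m n ≤ (T + 1) ^ m * L + ∑ j : Fin m,
      (∑ s ∈ range n, (s + 1) ^ m * h s +
        gapMomentSum P X φ j n * (n * gapMomentSum P X φ (m - (j + 1)) n)) := by
  have hsmall : ∑ i ∈ indexBox m n with ∀ k, i k ≤ T, gapMoment P X φ m i ≤ (T + 1) ^ m * L :=
    calc _ ≤ #{i ∈ indexBox m n | ∀ k, i k ≤ T} • L :=
          sum_le_card_nsmul _ _ _ fun i _ => (gapMoment_le_integral_abs hX hφm hφb m i).trans hL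
      _ ≤ (T + 1) ^ m * L := by
          rw [nsmul_eq_mul]
          gcongr
          · exact (integral_nonneg fun _ => abs_nonneg _).trans hL
          · exact_mod_cast card_filter_indexBox_le n T
  have hbig : ∀ j : Fin m, ∑ i ∈ indexBox m n with (∀ k, i k ≤ i j) ∧ T < i j,
      gapMoment P X φ m i ≤ ∑ s ∈ range n, (s + 1) ^ m * h s +
        gapMomentSum P X φ j n * (n * gapMomentSum P X φ (m - (j + 1)) n) := by
    intro j
    have hcov_sum : ∑ i ∈ indexBox m n with (∀ k, i k ≤ i j) ∧ T < i j,
        gapCov P X φ m (j + 1) i ≤ ∑ s ∈ range n, (s + 1) ^ m * h s :=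
      calc _ ≤ ∑ i ∈ indexBox m n with (∀ k, i k ≤ i j) ∧ T < i j, h (i j) :=
            sum_le_sum fun i hi => hcov i j (mem_filter.1 hi).2.1 (mem_filter.1 hi).2.2
        _ ≤ ∑ i ∈ indexBox m n with ∀ k, i k ≤ i j, h (i j) :=
            sum_le_sum_of_subset_of_nonneg (fun i hi => by
              simp only [mem_filter] at hi ⊢; exact ⟨hi.1, hi.2.1⟩) fun _ _ _ => hh _
        _ ≤ _ := sum_filter_max_le_sum_range j hh
    have hprod_sum : ∑ i ∈ indexBox m n with (∀ k, i k ≤ i j) ∧ T < i j,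
        gapMoment P X φ j (initGaps i j) * gapMoment P X φ (m - (j + 1)) (tailGaps i (j + 1)) ≤
          gapMomentSum P X φ j n * (n * gapMomentSum P X φ (m - (j + 1)) n) :=
      (sum_le_sum_of_subset_of_nonneg (filter_subset _ _) fun _ _ _ =>
        mul_nonneg (gapMoment_nonneg _ _) (gapMoment_nonneg _ _)).trans <|
        sum_mul_initGaps_tailGaps_le j (fun _ => gapMoment_nonneg _ _) fun _ => gapMoment_nonneg _ _
    calc _ ≤ ∑ i ∈ indexBox m n with (∀ k, i k ≤ i j) ∧ T < i j, (gapCov P X φ m (j + 1) i +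
          gapMoment P X φ j (initGaps i j) * gapMoment P X φ (m - (j + 1)) (tailGaps i (j + 1))) :=
          sum_le_sum fun i _ => gapMoment_le_gapCov_add_mul hX hstat hφm i j
      _ ≤ _ := by rw [sum_add_distrib]; exact add_le_add hcov_sum hprod_sum
  exact (sum_indexBox_le_sum_small_add_sum_max T fun i => gapMoment_nonneg m i).trans <|
    add_le_add hsmall (sum_le_sum fun j _ => hbig j)

lemma gapMomentSum_le_of_gapCov_le_geometric [IsFiniteMeasure P] (hX : ∀ n, Measurable (X n))
    (hstat : IsStationaryProc P X) (hφm : Measurable φ) (hφb : ∀ x, |φ x| ≤ 1)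
    {m n T D : ℕ} {L C ρ : ℝ} (hL : ∫ ω, |φ (X 0 ω)| ∂P ≤ L) (hC : 0 ≤ C) (hρ0 : 0 < ρ)
    (hρ1 : ρ < 1)
    (hcov : ∀ i (j : Fin m), (∀ k, i k ≤ i j) → T < i j →
      gapCov P X φ m (j + 1) i ≤ C * ((i j + 1) ^ D * ρ ^ i j)) :
    gapMomentSum P X φ m n ≤ (T + 1) ^ m * L + ∑ j : Fin m,
      (C * ∑' s : ℕ, ((s : ℝ) + 1) ^ (m + D) * ρ ^ s +
        gapMomentSum P X φ j n * (n * gapMomentSum P X φ (m - (j + 1)) n)) := by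
  refine (gapMomentSum_le_of_gapCov_le hX hstat hφm hφb hL
    (h := fun s => C * ((s + 1) ^ D * ρ ^ s)) (fun s => by positivity) hcov).trans ?_
  gcongr with j
  calc ∑ s ∈ range n, ((s : ℝ) + 1) ^ m * (C * ((s + 1) ^ D * ρ ^ s))
      = C * ∑ s ∈ range n, ((s : ℝ) + 1) ^ (m + D) * ρ ^ s := by
        rw [mul_sum]; exact sum_congr rfl fun s _ => by ring
    _ ≤ _ := by
        gcongr
        exact (summable_add_one_pow_mul_geometric hρ0 hρ1 _).sum_le_tsum _ fun s _ => by positivity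

end Moments

-- With `x = n ‖φ(X_0)‖_{L^r}` and `Λ = log (‖φ‖ + θ⁻¹)`, `momentRate (2p - 1) x Λ` is the sum
-- in the theorem.
def momentRate (m : ℕ) (x Λ : ℝ) : ℝ := ∑ w ∈ Icc 1 ((m + 1) / 2), x ^ w * Λ ^ (m + 1 - w)

section MomentRate
variable {x Λ : ℝ} (hx : 0 ≤ x) (hΛ : 0 ≤ Λ)
include hx hΛ

lemma momentRate_nonneg (m : ℕ) : 0 ≤ momentRate m x Λ :=
  sum_nonneg fun _ _ => by positivity

lemma mul_pow_le_momentRate {m : ℕ} (hm : 1 ≤ m) : x * Λ ^ m ≤ momentRate m x Λ := by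
  have := single_le_sum (f := fun w => x ^ w * Λ ^ (m + 1 - w)) (fun _ _ => by positivity)
    (mem_Icc.2 ⟨le_rfl, by omega⟩ : 1 ∈ Icc 1 ((m + 1) / 2))
  simpa [momentRate] using this

lemma momentRate_mul_le {m j : ℕ} (hj : j < m) :
    momentRate j x Λ * momentRate (m - (j + 1)) x Λ ≤ m ^ 2 * momentRate m x Λ := by
  have hterm : ∀ u ∈ Icc 1 ((j + 1) / 2), ∀ v ∈ Icc 1 ((m - (j + 1) + 1) / 2),
      x ^ u * Λ ^ (j + 1 - u) * (x ^ v * Λ ^ (m - (j + 1) + 1 - v)) ≤ momentRate m x Λ := by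
    intro u hu v hv
    rw [mem_Icc] at hu hv
    calc _ = x ^ (u + v) * Λ ^ (m + 1 - (u + v)) := by
          rw [show m + 1 - (u + v) = (j + 1 - u) + (m - (j + 1) + 1 - v) by omega]; ring
      _ ≤ _ := single_le_sum (f := fun w => x ^ w * Λ ^ (m + 1 - w)) (fun _ _ => by positivity)
          (mem_Icc.2 ⟨by omega, by omega⟩)
  have hcard : ∀ k ≤ m + 1, #(Icc 1 (k / 2)) ≤ m := fun k hk => by
    rw [Nat.card_Icc]; omega
  calc _ = ∑ u ∈ Icc 1 ((j + 1) / 2), ∑ v ∈ Icc 1 ((m - (j + 1) + 1) / 2),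
        x ^ u * Λ ^ (j + 1 - u) * (x ^ v * Λ ^ (m - (j + 1) + 1 - v)) := sum_mul_sum _ _ _ _
    _ ≤ ∑ u ∈ Icc 1 ((j + 1) / 2), ∑ v ∈ Icc 1 ((m - (j + 1) + 1) / 2), momentRate m x Λ :=
        sum_le_sum fun u hu => sum_le_sum fun v hv => hterm u hu v hv
    _ = #(Icc 1 ((j + 1) / 2)) * (#(Icc 1 ((m - (j + 1) + 1) / 2)) * momentRate m x Λ) := by
        simp only [sum_const, nsmul_eq_mul]
    _ ≤ m * (m * momentRate m x Λ) := by
        have := momentRate_nonneg hx hΛ m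
        gcongr
        · exact hcard (j + 1) (by omega)
        · exact hcard (m - (j + 1) + 1) (by omega)
    _ = m ^ 2 * momentRate m x Λ := by ring

end MomentRate

section Mixing

variable {d : ℕ} {Ω : Type*} [MeasurableSpace Ω] {P : Measure Ω} {X : ℕ → Ω → (Fin d → ℝ)}
  {B : Set ((Fin d → ℝ) → ℝ)} {Bnorm : ((Fin d → ℝ) → ℝ) → ℝ} {θ r : ℝ}

lemma MultipleMixing.exists_gapCov_le (hmix : MultipleMixing P X B Bnorm θ r)
    (hBnorm : ∀ φ, 0 ≤ Bnorm φ) (hθ : 0 ≤ θ) {m : ℕ} (hm : 1 ≤ m) :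
    ∃ C ≥ (0 : ℝ), ∃ ℓ D : ℕ, ∀ φ ∈ B, ∫ ω, φ (X 0 ω) ∂P = 0 → (∀ x, |φ x| ≤ 1) →
      ∀ (i : Fin m → ℕ) (j : Fin m), (∀ k, i k ≤ i j) →
        gapCov P X φ m (j + 1) i ≤
          C * (∫ ω, |φ (X 0 ω)| ^ r ∂P) ^ (1 / r) * Bnorm φ ^ ℓ * ((i j + 1) ^ D * θ ^ i j) := by
  obtain ⟨C, hC, ℓ, Q, hQ, hcov⟩ := hmix m hm
  refine ⟨C * ∑ μ ∈ Q.support, Q.coeff μ, mul_nonneg hC.le (sum_nonneg fun μ _ => hQ μ), ℓ,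
    Q.totalDegree, fun φ hφB hcent hφb i j hmax => ?_⟩
  have hbound := hcov i (j + 1) (by omega) j.isLt φ hφB hcent hφb
  simp only [Nat.add_sub_cancel, Fin.eta] at hbound
  have heval := MvPolynomial.eval_le_of_coeff_nonneg hQ (x := fun k => (i k : ℝ)) (s := i j)
    (Nat.cast_nonneg _) (fun k => Nat.cast_nonneg _) fun k => by exact_mod_cast hmax k
  have hb := hBnorm φ
  have hL : 0 ≤ (∫ ω, |φ (X 0 ω)| ^ r ∂P) ^ (1 / r) :=
    Real.rpow_nonneg (integral_nonneg fun _ => by positivity) _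
  calc _ ≤ _ := hbound
    _ ≤ C * (∫ ω, |φ (X 0 ω)| ^ r ∂P) ^ (1 / r) * Bnorm φ ^ ℓ *
        ((∑ μ ∈ Q.support, Q.coeff μ) * ((i j : ℝ) + 1) ^ Q.totalDegree) * θ ^ i j := by gcongr
    _ = _ := by ring

lemma MultipleMixing.exists_mul_gapMomentSum_le [IsProbabilityMeasure P]
    (hmix : MultipleMixing P X B Bnorm θ r) (hX : ∀ n, Measurable (X n))
    (hstat : IsStationaryProc P X) (hBnorm : ∀ φ, 0 ≤ Bnorm φ) (hBmeas : ∀ φ ∈ B, Measurable φ)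
    (hθ0 : 0 < θ) (hθ1 : θ < 1) (hr : 1 ≤ r) {m : ℕ} (hm : 1 ≤ m) :
    ∃ c ≥ (0 : ℝ), ∀ n : ℕ, ∀ φ ∈ B, ∫ ω, φ (X 0 ω) ∂P = 0 → (∀ x, |φ x| ≤ 1) →
      n * gapMomentSum P X φ m n ≤
        c * (n * (∫ ω, |φ (X 0 ω)| ^ r ∂P) ^ (1 / r) * Real.log (Bnorm φ + θ⁻¹) ^ m) +
        ∑ j : Fin m, (n * gapMomentSum P X φ j n) * (n * gapMomentSum P X φ (m - (j + 1)) n) := by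
  obtain ⟨C, hC, ℓ, D, hcov⟩ := hmix.exists_gapCov_le hBnorm hθ0.le hm
  set Λ₀ := Real.log θ⁻¹
  have hΛ₀ : 0 < Λ₀ := Real.log_pos ((one_lt_inv₀ hθ0).2 hθ1)
  set C₂ := ∑' s : ℕ, ((s : ℝ) + 1) ^ (m + D) * √θ ^ s
  have hC₂ : 0 ≤ C₂ := tsum_nonneg fun s => by positivity
  refine ⟨((2 * ℓ + 2) / Λ₀) ^ m + m * (C * C₂ / Λ₀ ^ m), by positivity [hC₂],
    fun n φ hφB hcent hφb => ?_⟩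
  have hφm := hBmeas φ hφB
  set L := (∫ ω, |φ (X 0 ω)| ^ r ∂P) ^ (1 / r)
  set Λ := Real.log (Bnorm φ + θ⁻¹)
  have hL : ∫ ω, |φ (X 0 ω)| ∂P ≤ L := integral_abs_le_integral_abs_rpow_rpow hr <|
    .of_bound (hφm.comp (hX 0)).aestronglyMeasurable 1 (ae_of_all _ fun ω => hφb _)
  have hL0 : 0 ≤ L := (integral_nonneg fun _ => abs_nonneg _).trans hL
  have hΛ : Λ₀ ≤ Λ := Real.log_le_log (inv_pos.2 hθ0) (le_add_of_nonneg_left (hBnorm φ))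
  obtain ⟨T, hT, hTθ⟩ := exists_threshold_pow_mul_pow_le_sqrt_pow (hBnorm φ) hθ0 hθ1 ℓ
  have hsum := gapMomentSum_le_of_gapCov_le_geometric hX hstat hφm hφb hL (T := T) (n := n)
    (by positivity : 0 ≤ C * L) (Real.sqrt_pos.2 hθ0)
    (by rw [Real.sqrt_lt' one_pos, one_pow]; exact hθ1)
    fun i j hmax hTj => (hcov φ hφB hcent hφb i j hmax).trans <| by
      have := hTθ _ hTj
      calc _ = C * L * ((i j + 1) ^ D * (Bnorm φ ^ ℓ * θ ^ i j)) := by ring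
        _ ≤ _ := by gcongr
  have hcovpart : C * L * C₂ ≤ C * C₂ / Λ₀ ^ m * (L * Λ ^ m) := by
    rw [div_mul_eq_mul_div, le_div_iff₀ (by positivity)]
    calc C * L * C₂ * Λ₀ ^ m ≤ C * L * C₂ * Λ ^ m := by gcongr
      _ = _ := by ring
  have hsmallpart : ((T : ℝ) + 1) ^ m * L ≤ ((2 * ℓ + 2) / Λ₀) ^ m * (L * Λ ^ m) := by
    calc ((T : ℝ) + 1) ^ m * L ≤ ((2 * ℓ + 2) / Λ₀ * Λ) ^ m * L := by gcongr
      _ = _ := by rw [mul_pow]; ring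
  calc (n : ℝ) * gapMomentSum P X φ m n ≤ n * (((2 * ℓ + 2) / Λ₀) ^ m * (L * Λ ^ m) +
      ∑ j : Fin m, (C * C₂ / Λ₀ ^ m * (L * Λ ^ m) +
        gapMomentSum P X φ j n * (n * gapMomentSum P X φ (m - (j + 1)) n))) := by
        gcongr
        refine hsum.trans (add_le_add hsmallpart (sum_le_sum fun j _ => ?_))
        exact add_le_add hcovpart le_rfl
    _ = _ := by
        simp only [mul_add, mul_sum, sum_add_distrib, sum_const, card_univ, Fintype.card_fin,
          nsmul_eq_mul, mul_assoc]
        ring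

lemma MultipleMixing.exists_mul_gapMomentSum_le_momentRate
    [IsProbabilityMeasure P] (hmix : MultipleMixing P X B Bnorm θ r) (hX : ∀ n, Measurable (X n))
    (hstat : IsStationaryProc P X) (hBnorm : ∀ φ, 0 ≤ Bnorm φ) (hBmeas : ∀ φ ∈ B, Measurable φ)
    (hθ0 : 0 < θ) (hθ1 : θ < 1) (hr : 1 ≤ r) (m : ℕ) :
    ∃ K ≥ (0 : ℝ), ∀ n : ℕ, ∀ φ ∈ B, ∫ ω, φ (X 0 ω) ∂P = 0 → (∀ x, |φ x| ≤ 1) →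
      n * gapMomentSum P X φ m n ≤ K * momentRate m (n * (∫ ω, |φ (X 0 ω)| ^ r ∂P) ^ (1 / r))
        (Real.log (Bnorm φ + θ⁻¹)) := by
  induction m using Nat.strong_induction_on with
  | _ m ih =>
  rcases Nat.eq_zero_or_pos m with rfl | hm
  · exact ⟨0, le_rfl, fun n φ _ hcent _ => by simp [gapMomentSum_zero hcent]⟩
  obtain ⟨c, hc, hstep⟩ := hmix.exists_mul_gapMomentSum_le hX hstat hBnorm hBmeas hθ0 hθ1 hr hm
  choose K hK hbound using ih
  refine ⟨c + m ^ 2 * ∑ j : Fin m, K j j.isLt * K (m - (j + 1)) (by omega),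
    add_nonneg hc (mul_nonneg (by positivity) (sum_nonneg fun j _ => mul_nonneg (hK _ _) (hK _ _))),
    fun n φ hφB hcent hφb => ?_⟩
  set x := (n : ℝ) * (∫ ω, |φ (X 0 ω)| ^ r ∂P) ^ (1 / r)
  set Λ := Real.log (Bnorm φ + θ⁻¹)
  have hx : 0 ≤ x :=
    mul_nonneg n.cast_nonneg (Real.rpow_nonneg (integral_nonneg fun ω => by positivity) _)
  have hΛ : 0 ≤ Λ := Real.log_nonneg (by linarith [hBnorm φ, (one_lt_inv₀ hθ0).2 hθ1])
  have hR := momentRate_nonneg hx hΛ m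
  calc (n : ℝ) * gapMomentSum P X φ m n
      ≤ c * (x * Λ ^ m) + ∑ j : Fin m, (n * gapMomentSum P X φ j n) *
          (n * gapMomentSum P X φ (m - (j + 1)) n) := hstep n φ hφB hcent hφb
    _ ≤ c * momentRate m x Λ + ∑ j : Fin m, (K j j.isLt * momentRate j x Λ) *
          (K (m - (j + 1)) (by omega) * momentRate (m - (j + 1)) x Λ) :=
        add_le_add (mul_le_mul_of_nonneg_left (mul_pow_le_momentRate hx hΛ hm) hc) <|
          sum_le_sum fun j _ => mul_le_mul (hbound _ _ n φ hφB hcent hφb)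
            (hbound _ _ n φ hφB hcent hφb) (mul_nonneg n.cast_nonneg (gapMomentSum_nonneg _ _))
            (mul_nonneg (hK _ _) (momentRate_nonneg hx hΛ _))
    _ ≤ c * momentRate m x Λ + ∑ j : Fin m, K j j.isLt * K (m - (j + 1)) (by omega) *
          (m ^ 2 * momentRate m x Λ) :=
        add_le_add le_rfl <| sum_le_sum fun j _ => by
          rw [mul_mul_mul_comm]
          exact mul_le_mul_of_nonneg_left (momentRate_mul_le hx hΛ j.isLt)
            (mul_nonneg (hK _ _) (hK _ _))
    _ = _ := by rw [← sum_mul]; ring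

end Mixing

theorem even_moment_bound_of_multipleMixing_general
    {d : ℕ} {Ω : Type*} [MeasurableSpace Ω] (P : Measure Ω) [IsProbabilityMeasure P]
    (X : ℕ → Ω → (Fin d → ℝ)) (hX : ∀ n, Measurable (X n))
    (hstat : IsStationaryProc P X)
    (B : Set ((Fin d → ℝ) → ℝ)) (Bnorm : ((Fin d → ℝ) → ℝ) → ℝ)
    (hBnorm : ∀ φ, 0 ≤ Bnorm φ) (hBmeas : ∀ φ ∈ B, Measurable φ)
    (θ r : ℝ) (hθ0 : 0 < θ) (hθ1 : θ < 1) (hr : 1 ≤ r)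
    (hmix : MultipleMixing P X B Bnorm θ r)
    (p : ℕ) (hp : 1 ≤ p) :
    ∃ K > (0 : ℝ), ∀ n : ℕ, 1 ≤ n → ∀ φ ∈ B,
      (∫ ω, φ (X 0 ω) ∂P) = 0 → (∀ x, |φ x| ≤ 1) →
      ∫ ω, (∑ i ∈ Finset.range n, φ (X i ω)) ^ (2 * p) ∂P ≤
        K * ∑ i ∈ Finset.Icc 1 p, (n : ℝ) ^ i *
          ((∫ ω, |φ (X 0 ω)| ^ r ∂P) ^ (1 / r)) ^ i *
          Real.log (Bnorm φ + θ⁻¹) ^ (2 * p - i) := by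
  obtain ⟨K, hK, hbound⟩ :=
    hmix.exists_mul_gapMomentSum_le_momentRate hX hstat hBnorm hBmeas hθ0 hθ1 hr (2 * p - 1)
  refine ⟨(2 * p).factorial * K + 1, by positivity, fun n _ φ hφB hcent hφb => ?_⟩
  set x := (n : ℝ) * (∫ ω, |φ (X 0 ω)| ^ r ∂P) ^ (1 / r)
  set Λ := Real.log (Bnorm φ + θ⁻¹)
  have hp' : 2 * p - 1 + 1 = 2 * p := by omega
  have hrate : momentRate (2 * p - 1) x Λ = ∑ i ∈ Icc 1 p, (n : ℝ) ^ i *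
      ((∫ ω, |φ (X 0 ω)| ^ r ∂P) ^ (1 / r)) ^ i * Λ ^ (2 * p - i) := by
    rw [momentRate, hp', show 2 * p / 2 = p by omega]
    simp only [x, mul_pow]
  have hR : 0 ≤ momentRate (2 * p - 1) x Λ := momentRate_nonneg
    (mul_nonneg n.cast_nonneg (Real.rpow_nonneg (integral_nonneg fun ω => by positivity) _))
    (Real.log_nonneg (by linarith [hBnorm φ, (one_lt_inv₀ hθ0).2 hθ1])) _
  calc ∫ ω, (∑ i ∈ range n, φ (X i ω)) ^ (2 * p) ∂P
      ≤ (2 * p).factorial * (n * gapMomentSum P X φ (2 * p - 1) n) := by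
        simpa only [hp'] using integral_sum_pow_succ_le hX hstat (hBmeas φ hφB) hφb (2 * p - 1) n
    _ ≤ (2 * p).factorial * (K * momentRate (2 * p - 1) x Λ) :=
        mul_le_mul_of_nonneg_left (hbound n φ hφB hcent hφb) (by positivity)
    _ ≤ ((2 * p).factorial * K + 1) * momentRate (2 * p - 1) x Λ := by nlinarith
    _ = _ := by rw [hrate]

/-- even moment bound under multiple mixing:
`E[(S_n(φ))^{2p}] ≤ K Σ_{i=1}^p n^i ‖φ(X_0)‖_{L^r}^i (log(‖φ‖ + θ⁻¹))^{2p-i}`. -/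
theorem even_moment_bound_of_multipleMixing
    {d : ℕ} {Ω : Type*} [MeasurableSpace Ω] (P : Measure Ω) [IsProbabilityMeasure P]
    (X : ℕ → Ω → (Fin d → ℝ)) (hX : ∀ n, Measurable (X n))
    (hstat : IsStationaryProc P X)
    (B : Set ((Fin d → ℝ) → ℝ)) (Bnorm : ((Fin d → ℝ) → ℝ) → ℝ)
    (hBnorm : ∀ φ, 0 ≤ Bnorm φ) (hBmeas : ∀ φ ∈ B, Measurable φ)
    (hBbdd : ∀ φ ∈ B, ∃ c : ℝ, ∀ x, |φ x| ≤ c)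
    (θ r : ℝ) (hθ0 : 0 < θ) (hθ1 : θ < 1) (hr : 1 ≤ r)
    (hmix : MultipleMixing P X B Bnorm θ r)
    (p : ℕ) (hp : 1 ≤ p) :
    ∃ K > (0 : ℝ), ∀ n : ℕ, 1 ≤ n → ∀ φ ∈ B,
      (∫ ω, φ (X 0 ω) ∂P) = 0 → (∀ x, |φ x| ≤ 1) →
      ∫ ω, (∑ i ∈ Finset.range n, φ (X i ω)) ^ (2 * p) ∂P ≤
        K * ∑ i ∈ Finset.Icc 1 p, (n : ℝ) ^ i *
          ((∫ ω, |φ (X 0 ω)| ^ r ∂P) ^ (1 / r)) ^ i *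
          Real.log (Bnorm φ + θ⁻¹) ^ (2 * p - i) :=
  even_moment_bound_of_multipleMixing_general P X hX hstat B Bnorm hBnorm hBmeas θ r hθ0 hθ1 hr hmix
    p hp

end
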